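/- arXiv:math/0503390 — 8 statements merged into one kernel-verified Lean document; each statement's English description precedes it below -/
import Mathlib

section
/- Let Q ∈ SO(3), b ∈ ℝ³, and Ω₁ = (w₁, −v₁, u₁), Ω₂ = (w₂, −v₂, u₂) ∈ ℝ³. If Q Ω̂₂ = Ω̂₁ Q and Q e₁ = Ω̂₁ b + e₁ (where e₁ = (1,0,0)), then w₁ = w₂ and u₁² + v₁² = u₂² + v₂². -/
open Matrix

/-- The hat map: `hat Γ` is the skew-symmetric matrix such that `(hat Γ).mulVec v = Γ × v`. -/
def hat (Γ : Fin 3 → ℝ) : Matrix (Fin 3) (Fin 3) ℝ :=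
  !![0, -Γ 2, Γ 1; Γ 2, 0, -Γ 0; -Γ 1, Γ 0, 0]

private lemma recover (Q : Matrix (Fin 3) (Fin 3) ℝ) (hQ : Qᵀ * Q = 1) (r x : Fin 3 → ℝ)
    (h : Q.mulVec r = x) : r = Qᵀ.mulVec x := by
  rw [← h, Matrix.mulVec_mulVec, hQ, Matrix.one_mulVec]

theorem stmt1 (Q : Matrix (Fin 3) (Fin 3) ℝ)
    (hQ : Qᵀ * Q = 1) (hdet : Q.det = 1)
    (b : Fin 3 → ℝ) (w₁ v₁ u₁ w₂ v₂ u₂ : ℝ)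
    (h1 : Q * hat ![w₂, -v₂, u₂] = hat ![w₁, -v₁, u₁] * Q)
    (h2 : Q.mulVec ![1, 0, 0] = (hat ![w₁, -v₁, u₁]).mulVec b + ![1, 0, 0]) :
    w₁ = w₂ ∧ u₁ ^ 2 + v₁ ^ 2 = u₂ ^ 2 + v₂ ^ 2 := by
  have hQQt : Q * Qᵀ = 1 := mul_eq_one_comm.mp hQ
  have hd : Q 0 0 * Q 1 1 * Q 2 2 - Q 0 0 * Q 1 2 * Q 2 1 - Q 0 1 * Q 1 0 * Q 2 2
      + Q 0 1 * Q 1 2 * Q 2 0 + Q 0 2 * Q 1 0 * Q 2 1 - Q 0 2 * Q 1 1 * Q 2 0 = 1 := by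
    rw [Matrix.det_fin_three] at hdet; linear_combination hdet
  -- row1 × row2 = row0
  have c1 : ![Q 1 1 * Q 2 2 - Q 1 2 * Q 2 1, Q 1 2 * Q 2 0 - Q 1 0 * Q 2 2,
      Q 1 0 * Q 2 1 - Q 1 1 * Q 2 0] = Qᵀ.mulVec ![1, 0, 0] := by
    apply recover Q hQ
    ext k
    fin_cases k <;>
      simp [Matrix.mulVec, dotProduct, Fin.sum_univ_three] <;> ring_nf
    · linear_combination hd
  have c1' : ∀ k, (![Q 1 1 * Q 2 2 - Q 1 2 * Q 2 1, Q 1 2 * Q 2 0 - Q 1 0 * Q 2 2,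
      Q 1 0 * Q 2 1 - Q 1 1 * Q 2 0] : Fin 3 → ℝ) k = Q 0 k := by
    intro k; rw [c1]
    fin_cases k <;> simp [Matrix.mulVec, dotProduct, Fin.sum_univ_three]
  -- row2 × row0 = row1
  have c2 : ![Q 2 1 * Q 0 2 - Q 2 2 * Q 0 1, Q 2 2 * Q 0 0 - Q 2 0 * Q 0 2,
      Q 2 0 * Q 0 1 - Q 2 1 * Q 0 0] = Qᵀ.mulVec ![0, 1, 0] := by
    apply recover Q hQ
    ext k
    fin_cases k <;>
      simp [Matrix.mulVec, dotProduct, Fin.sum_univ_three] <;> ring_nf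
    · linear_combination hd
  have c2' : ∀ k, (![Q 2 1 * Q 0 2 - Q 2 2 * Q 0 1, Q 2 2 * Q 0 0 - Q 2 0 * Q 0 2,
      Q 2 0 * Q 0 1 - Q 2 1 * Q 0 0] : Fin 3 → ℝ) k = Q 1 k := by
    intro k; rw [c2]
    fin_cases k <;> simp [Matrix.mulVec, dotProduct, Fin.sum_univ_three]
  -- row0 × row1 = row2
  have c3 : ![Q 0 1 * Q 1 2 - Q 0 2 * Q 1 1, Q 0 2 * Q 1 0 - Q 0 0 * Q 1 2,
      Q 0 0 * Q 1 1 - Q 0 1 * Q 1 0] = Qᵀ.mulVec ![0, 0, 1] := by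
    apply recover Q hQ
    ext k
    fin_cases k <;>
      simp [Matrix.mulVec, dotProduct, Fin.sum_univ_three] <;> ring_nf
    · linear_combination hd
  have c3' : ∀ k, (![Q 0 1 * Q 1 2 - Q 0 2 * Q 1 1, Q 0 2 * Q 1 0 - Q 0 0 * Q 1 2,
      Q 0 0 * Q 1 1 - Q 0 1 * Q 1 0] : Fin 3 → ℝ) k = Q 2 k := by
    intro k; rw [c3]
    fin_cases k <;> simp [Matrix.mulVec, dotProduct, Fin.sum_univ_three]
  -- conjugated hat equation
  have h1' : Q * hat ![w₂, -v₂, u₂] * Qᵀ = hat ![w₁, -v₁, u₁] := by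
    rw [h1, Matrix.mul_assoc, hQQt, Matrix.mul_one]
  have e21 := congrFun (congrFun h1' 2) 1
  have e02 := congrFun (congrFun h1' 0) 2
  have e10 := congrFun (congrFun h1' 1) 0
  simp [hat, Matrix.mul_apply, Fin.sum_univ_three] at e21 e02 e10
  -- Ω₁ = Q Ω₂
  have hA0 : Q 0 0 * w₂ + Q 0 1 * (-v₂) + Q 0 2 * u₂ = w₁ := by
    have k0 := c1' 0; have k1 := c1' 1; have k2 := c1' 2
    simp at k0 k1 k2
    linear_combination e21 - w₂ * k0 + v₂ * k1 - u₂ * k2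
  have hA1 : Q 1 0 * w₂ + Q 1 1 * (-v₂) + Q 1 2 * u₂ = -v₁ := by
    have k0 := c2' 0; have k1 := c2' 1; have k2 := c2' 2
    simp at k0 k1 k2
    linear_combination e02 - w₂ * k0 + v₂ * k1 - u₂ * k2
  have hA2 : Q 2 0 * w₂ + Q 2 1 * (-v₂) + Q 2 2 * u₂ = u₁ := by
    have k0 := c3' 0; have k1 := c3' 1; have k2 := c3' 2
    simp at k0 k1 k2
    linear_combination e10 - w₂ * k0 + v₂ * k1 - u₂ * k2
  -- components of h2
  have hB0 := congrFun h2 0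
  have hB1 := congrFun h2 1
  have hB2 := congrFun h2 2
  simp [hat, Matrix.mulVec, dotProduct, Fin.sum_univ_three] at hB0 hB1 hB2
  -- column orthonormality
  have hS : ∀ i j, Q 0 i * Q 0 j + Q 1 i * Q 1 j + Q 2 i * Q 2 j = if i = j then 1 else 0 := by
    intro i j
    have := congrFun (congrFun hQ i) j
    simpa [Matrix.mul_apply, Fin.sum_univ_three, Matrix.one_apply] using this
  have hS00 := hS 0 0; have hS01 := hS 0 1; have hS02 := hS 0 2
  have hS11 := hS 1 1; have hS12 := hS 1 2; have hS22 := hS 2 2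
  simp at hS00 hS01 hS02 hS11 hS12 hS22
  have hw : w₁ = w₂ := by
    linear_combination -Q 0 0 * hA0 - Q 1 0 * hA1 - Q 2 0 * hA2 + w₂ * hS00 - v₂ * hS01
      + u₂ * hS02 - w₁ * hB0 + v₁ * hB1 - u₁ * hB2
  refine ⟨hw, ?_⟩
  linear_combination -(Q 0 0 * w₂ + Q 0 1 * (-v₂) + Q 0 2 * u₂ + w₁) * hA0
    - (Q 1 0 * w₂ + Q 1 1 * (-v₂) + Q 1 2 * u₂ + (-v₁)) * hA1
    - (Q 2 0 * w₂ + Q 2 1 * (-v₂) + Q 2 2 * u₂ + u₁) * hA2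
    + w₂ ^ 2 * hS00 + v₂ ^ 2 * hS11 + u₂ ^ 2 * hS22
    - 2 * w₂ * v₂ * hS01 + 2 * w₂ * u₂ * hS02 - 2 * v₂ * u₂ * hS12
    - (w₁ + w₂) * hw
end

section
/- Let w, a ∈ ℝ with a² + w² ≠ 0, let ψ₁, ψ₂ ∈ ℝ, and set Ω_j = (w, a sin ψ_j, a cos ψ_j) for j = 1,2. Let φ be defined by cos φ = a/√(a²+w²) and sin φ = w/√(a²+w²). If Q ∈ SO(3) satisfies Q Ω₂ = Ω₁, then there exists ϑ ∈ [0, 2π) such that Q = R_{ψ₁}ᵀ R_φᵀ R_ϑ R_φ R_{ψ₂}. -/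
open Matrix Real

/-- Rotation about the first axis. -/
noncomputable def Rpsi (ψ : ℝ) : Matrix (Fin 3) (Fin 3) ℝ :=
  !![1, 0, 0; 0, Real.cos ψ, -Real.sin ψ; 0, Real.sin ψ, Real.cos ψ]

/-- The rotation `R_φ` about the second axis. -/
noncomputable def Rphi (φ : ℝ) : Matrix (Fin 3) (Fin 3) ℝ :=
  !![Real.cos φ, 0, -Real.sin φ; 0, 1, 0; Real.sin φ, 0, Real.cos φ]

/-- Rotation about the third axis. -/
noncomputable def Rtheta (ϑ : ℝ) : Matrix (Fin 3) (Fin 3) ℝ :=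
  !![Real.cos ϑ, -Real.sin ϑ, 0; Real.sin ϑ, Real.cos ϑ, 0; 0, 0, 1]

lemma Rpsi_orth (ψ : ℝ) : (Rpsi ψ)ᵀ * Rpsi ψ = 1 := by
  ext i j
  fin_cases i <;> fin_cases j <;>
    simp [Rpsi, Matrix.mul_apply, Fin.sum_univ_three, Matrix.one_apply, Matrix.vecHead, Matrix.vecTail] <;>
    nlinarith [sin_sq_add_cos_sq ψ]

lemma Rpsi_orth' (ψ : ℝ) : Rpsi ψ * (Rpsi ψ)ᵀ = 1 :=
  mul_eq_one_comm.mp (Rpsi_orth ψ)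

lemma Rphi_orth (φ : ℝ) : (Rphi φ)ᵀ * Rphi φ = 1 := by
  ext i j
  fin_cases i <;> fin_cases j <;>
    simp [Rphi, Matrix.mul_apply, Fin.sum_univ_three, Matrix.one_apply, Matrix.vecHead, Matrix.vecTail] <;>
    nlinarith [sin_sq_add_cos_sq φ]

lemma Rphi_orth' (φ : ℝ) : Rphi φ * (Rphi φ)ᵀ = 1 :=
  mul_eq_one_comm.mp (Rphi_orth φ)

lemma Rpsi_det (ψ : ℝ) : (Rpsi ψ).det = 1 := by
  simp [Rpsi, Matrix.det_fin_three]
  nlinarith [sin_sq_add_cos_sq ψ]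

lemma Rphi_det (φ : ℝ) : (Rphi φ).det = 1 := by
  simp [Rphi, Matrix.det_fin_three]
  nlinarith [sin_sq_add_cos_sq φ]

lemma exists_theta {c s : ℝ} (h : c ^ 2 + s ^ 2 = 1) :
    ∃ ϑ ∈ Set.Ico (0 : ℝ) (2 * Real.pi), Real.cos ϑ = c ∧ Real.sin ϑ = s := by
  have hc1 : -1 ≤ c := by nlinarith
  have hc2 : c ≤ 1 := by nlinarith
  have hcos := Real.cos_arccos hc1 hc2
  have hsin : Real.sin (Real.arccos c) = Real.sqrt (1 - c ^ 2) := by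
    rw [Real.sin_arccos]
  have hs2 : Real.sqrt (1 - c ^ 2) = |s| := by
    rw [show (1 : ℝ) - c ^ 2 = s ^ 2 by linarith]
    exact Real.sqrt_sq_eq_abs s
  rcases le_or_gt 0 s with hs | hs
  · refine ⟨Real.arccos c, ⟨Real.arccos_nonneg c, ?_⟩, hcos, ?_⟩
    · have := Real.arccos_le_pi c
      have := Real.pi_pos
      linarith
    · rw [hsin, hs2, abs_of_nonneg hs]
  · refine ⟨2 * Real.pi - Real.arccos c, ⟨?_, ?_⟩, ?_, ?_⟩
    · have := Real.arccos_le_pi c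
      have := Real.pi_pos
      linarith
    · have hcne : c ≠ 1 := by intro h1; rw [h1] at h; nlinarith
      have : 0 < Real.arccos c := by
        rcases (Real.arccos_nonneg c).lt_or_eq with h' | h'
        · exact h'
        · exfalso
          have := Real.cos_arccos hc1 hc2
          rw [← h'] at this
          simp at this
          exact hcne this.symm
      linarith
    · rw [Real.cos_sub, Real.cos_two_pi, Real.sin_two_pi]
      simp [hcos]
    · rw [Real.sin_sub, Real.cos_two_pi, Real.sin_two_pi]
      rw [hsin, hs2, abs_of_neg hs]; ring

lemma fix_e3 (M : Matrix (Fin 3) (Fin 3) ℝ) (hM : Mᵀ * M = 1) (hd : M.det = 1)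
    (he : M.mulVec ![0, 0, 1] = ![0, 0, 1]) :
    ∃ ϑ ∈ Set.Ico (0 : ℝ) (2 * Real.pi), M = Rtheta ϑ := by
  have hM' : M * Mᵀ = 1 := mul_eq_one_comm.mp hM
  have h02 : M 0 2 = 0 := by
    have := congrFun he 0
    simpa [Matrix.mulVec, dotProduct, Fin.sum_univ_three] using this
  have h12 : M 1 2 = 0 := by
    have := congrFun he 1
    simpa [Matrix.mulVec, dotProduct, Fin.sum_univ_three] using this
  have h22 : M 2 2 = 1 := by
    have := congrFun he 2
    simpa [Matrix.mulVec, dotProduct, Fin.sum_univ_three] using this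
  have hrow2 : M 2 0 ^ 2 + M 2 1 ^ 2 + M 2 2 ^ 2 = 1 := by
    have := congrFun (congrFun hM' 2) 2
    simp [Matrix.mul_apply, Fin.sum_univ_three, Matrix.one_apply] at this
    nlinarith [this]
  have h20 : M 2 0 = 0 := by nlinarith [sq_nonneg (M 2 0), sq_nonneg (M 2 1)]
  have h21 : M 2 1 = 0 := by nlinarith [sq_nonneg (M 2 0), sq_nonneg (M 2 1)]
  have hcol0 : M 0 0 ^ 2 + M 1 0 ^ 2 + M 2 0 ^ 2 = 1 := by
    have := congrFun (congrFun hM 0) 0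
    simp [Matrix.mul_apply, Fin.sum_univ_three, Matrix.one_apply] at this
    nlinarith [this]
  have hcs : M 0 0 ^ 2 + M 1 0 ^ 2 = 1 := by rw [h20] at hcol0; nlinarith
  have hortho : M 0 0 * M 0 1 + M 1 0 * M 1 1 = 0 := by
    have := congrFun (congrFun hM 0) 1
    simp [Matrix.mul_apply, Fin.sum_univ_three, Matrix.one_apply, h20, h21] at this
    linarith [this]
  have hdet' : M 0 0 * M 1 1 - M 0 1 * M 1 0 = 1 := by
    have := hd
    rw [Matrix.det_fin_three] at this
    rw [h02, h12, h20, h21, h22] at this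
    linarith [this]
  have h11 : M 1 1 = M 0 0 := by
    linear_combination M 0 0 * hdet' + M 1 0 * hortho - M 1 1 * hcs
  have h01 : M 0 1 = -(M 1 0) := by
    linear_combination (-(M 1 0)) * hdet' + M 0 0 * hortho - M 0 1 * hcs
  obtain ⟨ϑ, hmem, hc, hs⟩ := exists_theta hcs
  refine ⟨ϑ, hmem, ?_⟩
  ext i j
  fin_cases i <;> fin_cases j <;>
    simp [Rtheta, hc, hs, h02, h12, h22, h20, h21, h11, h01]

theorem stmt2 (w a ψ₁ ψ₂ φ : ℝ) (ha : a ^ 2 + w ^ 2 ≠ 0)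
    (hcos : Real.cos φ = a / Real.sqrt (a ^ 2 + w ^ 2))
    (hsin : Real.sin φ = w / Real.sqrt (a ^ 2 + w ^ 2))
    (Q : Matrix (Fin 3) (Fin 3) ℝ)
    (hQ : Qᵀ * Q = 1) (hdet : Q.det = 1)
    (h : Q.mulVec ![w, a * Real.sin ψ₂, a * Real.cos ψ₂] = ![w, a * Real.sin ψ₁, a * Real.cos ψ₁]) :
    ∃ ϑ ∈ Set.Ico (0 : ℝ) (2 * Real.pi),
      Q = (Rpsi ψ₁)ᵀ * (Rphi φ)ᵀ * Rtheta ϑ * Rphi φ * Rpsi ψ₂ := by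
  set r := Real.sqrt (a ^ 2 + w ^ 2) with hr_def
  have haw : 0 < a ^ 2 + w ^ 2 := lt_of_le_of_ne (by positivity) (Ne.symm ha)
  have hrpos : 0 < r := Real.sqrt_pos.mpr haw
  have hrne : r ≠ 0 := hrpos.ne'
  have hca : r * Real.cos φ = a := by rw [hcos]; field_simp
  have hsw : r * Real.sin φ = w := by rw [hsin]; field_simp
  -- the maps A j = Rphi φ * Rpsi ψ_j send Ω_j to (0,0,r)
  have hAvec : ∀ ψ : ℝ, (Rphi φ * Rpsi ψ).mulVec ![w, a * Real.sin ψ, a * Real.cos ψ]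
      = ![0, 0, r] := by
    intro ψ
    funext i
    fin_cases i <;>
      simp [Rphi, Rpsi, Matrix.mulVec, dotProduct, Matrix.mul_apply,
        Fin.sum_univ_three, Matrix.vecHead, Matrix.vecTail]
    · linear_combination (-(Real.cos φ)) * hsw + Real.sin φ * hca +
        (-(a * Real.sin φ)) * sin_sq_add_cos_sq ψ
    · ring
    · linear_combination (-(Real.sin φ)) * hsw + (-(Real.cos φ)) * hca +
        (a * Real.cos φ) * sin_sq_add_cos_sq ψ + r * sin_sq_add_cos_sq φ
  have hAv₁ := hAvec ψ₁
  have hAv₂ := hAvec ψ₂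
  set A₁ := Rphi φ * Rpsi ψ₁ with hA1
  set A₂ := Rphi φ * Rpsi ψ₂ with hA2
  have hA1o : A₁ᵀ * A₁ = 1 := by
    rw [hA1, Matrix.transpose_mul, Matrix.mul_assoc, ← Matrix.mul_assoc (Rphi φ)ᵀ,
      Rphi_orth, Matrix.one_mul, Rpsi_orth]
  have hA2o : A₂ᵀ * A₂ = 1 := by
    rw [hA2, Matrix.transpose_mul, Matrix.mul_assoc, ← Matrix.mul_assoc (Rphi φ)ᵀ,
      Rphi_orth, Matrix.one_mul, Rpsi_orth]
  have hA2o' : A₂ * A₂ᵀ = 1 := mul_eq_one_comm.mp hA2o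
  set M := A₁ * Q * A₂ᵀ with hM
  have hMo : Mᵀ * M = 1 := by
    have e : Mᵀ * M = A₂ * (Qᵀ * ((A₁ᵀ * A₁) * Q) * A₂ᵀ) := by
      rw [hM]
      simp only [Matrix.transpose_mul, Matrix.transpose_transpose, Matrix.mul_assoc]
    rw [e, hA1o, Matrix.one_mul, hQ, Matrix.one_mul, hA2o']
  have hMdet : M.det = 1 := by
    have d1 : A₁.det = 1 := by rw [hA1, Matrix.det_mul, Rphi_det, Rpsi_det]; ring
    have d2 : A₂.det = 1 := by rw [hA2, Matrix.det_mul, Rphi_det, Rpsi_det]; ring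
    rw [hM, Matrix.det_mul, Matrix.det_mul, d1, Matrix.det_transpose, d2, hdet]; ring
  have hMe : M.mulVec ![0, 0, 1] = ![0, 0, 1] := by
    have key : M.mulVec ![0, 0, r] = ![0, 0, r] := by
      rw [← hAv₂, Matrix.mulVec_mulVec, hM, Matrix.mul_assoc (A₁ * Q), hA2o,
        Matrix.mul_one, ← Matrix.mulVec_mulVec, h, hAv₁]
      exact hAv₂.symm
    have hsmul : (![0, 0, r] : Fin 3 → ℝ) = r • ![0, 0, 1] := by
      funext i; fin_cases i <;> simp
    rw [hsmul, Matrix.mulVec_smul] at key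
    exact smul_right_injective (Fin 3 → ℝ) hrne key
  obtain ⟨ϑ, hmem, hMeq⟩ := fix_e3 M hMo hMdet hMe
  refine ⟨ϑ, hmem, ?_⟩
  have hQeq : Q = A₁ᵀ * M * A₂ := by
    rw [hM, Matrix.mul_assoc, Matrix.mul_assoc, hA2o, Matrix.mul_one, ← Matrix.mul_assoc,
      hA1o, Matrix.one_mul]
  rw [hQeq, hMeq, hA1, hA2]
  simp only [Matrix.transpose_mul, Matrix.mul_assoc]
end

section
/- Let x₁, x₂, u ∈ ℝ³ be unit vectors and let σ ∈ {−1, +1}. Then [1 − (x₁·x₂)²] + σ·( (x₁·x₂)·[ (u·x₁)² + (u·x₂)² ] − 2 (u·x₁)(u·x₂) ) ≥ 0. -/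
open RealInnerProductSpace

theorem stmt6 (x₁ x₂ u : EuclideanSpace ℝ (Fin 3))
    (hx₁ : ‖x₁‖ = 1) (hx₂ : ‖x₂‖ = 1) (hu : ‖u‖ = 1)
    (σ : ℝ) (hσ : σ = -1 ∨ σ = 1) :
    (1 - ⟪x₁, x₂⟫ ^ 2) +
      σ * (⟪x₁, x₂⟫ * (⟪u, x₁⟫ ^ 2 + ⟪u, x₂⟫ ^ 2) - 2 * ⟪u, x₁⟫ * ⟪u, x₂⟫) ≥ 0 := by
  set a := ⟪u, x₁⟫ with ha
  set b := ⟪u, x₂⟫ with hb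
  set c := ⟪x₁, x₂⟫ with hc
  have e1 : ⟪u, u⟫ = 1 := by
    rw [real_inner_self_eq_norm_mul_norm, hu]; ring
  have e2 : ⟪x₁, x₁⟫ = 1 := by
    rw [real_inner_self_eq_norm_mul_norm, hx₁]; ring
  have e3 : ⟪x₂, x₂⟫ = 1 := by
    rw [real_inner_self_eq_norm_mul_norm, hx₂]; ring
  have s1 : ⟪x₁, u⟫ = a := by rw [real_inner_comm]
  have s2 : ⟪x₂, u⟫ = b := by rw [real_inner_comm]
  have s3 : ⟪x₂, x₁⟫ = c := by rw [real_inner_comm]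
  have hcs := real_inner_mul_inner_self_le (u - a • x₁) (x₂ - c • x₁)
  simp only [inner_sub_left, inner_sub_right, real_inner_smul_left,
    real_inner_smul_right, e1, e2, e3, s1, s2, s3, ← ha, ← hb, ← hc] at hcs
  have hC : |c| ≤ 1 := by
    have := abs_real_inner_le_norm x₁ x₂
    rwa [hx₁, hx₂, one_mul, ← hc] at this
  have hC' := abs_le.mp hC
  rcases hσ with h | h <;> subst h <;>
    nlinarith [sq_nonneg (a - b), sq_nonneg (a + b), hC'.1, hC'.2, hcs]
end

section
/- Let (x₁, y₁, z₁) and (x₂, y₂, z₂) be two orthonormal frames in ℝ³, let u ∈ ℝ³ be a unit vector, and let σ ∈ {−1, +1}. Then (x₁·y₂)[ (1/2)(x₁·y₂) + σ (u·x₂)(u·y₂) ] + (x₂·y₁)[ (1/2)(x₂·y₁) + σ (u·x₁)(u·y₁) ] + (x₁·z₂)[ (1/2)(x₁·z₂) + σ (u·x₂)(u·z₂) ] + (x₂·z₁)[ (1/2)(x₂·z₁) + σ (u·x₁)(u·z₁) ] ≥ 0. -/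
open RealInnerProductSpace

/-!
Write `c = x₁·x₂`, `p = u·x₁`, `q = u·y₁`, `r = u·z₁`, `p' = u·x₂` and `a₁, …, a₄` for the four
cross products `x₁·y₂, x₂·y₁, x₁·z₂, x₂·z₁`. Parseval's identity in the two frames gives
`c² + a₁² + a₃² = c² + a₂² + a₄² = p² + q² + r² = 1` and expresses `p` in frame 2 and `p'` in
frame 1. Modulo these relations and `σ² = 1` the quantity equals
`(a₂ r - a₄ q)² + (1 - σ c)(p + σ p')²`, which is nonnegative because `|c| ≤ 1`.
-/

/-- An orthonormal frame in ℝ³: an ordered triple of pairwise orthogonal unit vectors. -/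
def IsONFrame (x y z : EuclideanSpace ℝ (Fin 3)) : Prop :=
  ‖x‖ = 1 ∧ ‖y‖ = 1 ∧ ‖z‖ = 1 ∧ ⟪x, y⟫ = 0 ∧ ⟪x, z⟫ = 0 ∧ ⟪y, z⟫ = 0

theorem Orthonormal.sum_inner_mul_inner_of_card_eq_finrank {ι E : Type*} [Fintype ι]
    [NormedAddCommGroup E] [InnerProductSpace ℝ E] [FiniteDimensional ℝ E] {v : ι → E}
    (hv : Orthonormal ℝ v) (hcard : Fintype.card ι = Module.finrank ℝ E) (x y : E) :
    ∑ i, ⟪x, v i⟫ * ⟪v i, y⟫ = ⟪x, y⟫ := by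
  have hsp : ⊤ ≤ Submodule.span ℝ (Set.range v) :=
    (hv.linearIndependent.span_eq_top_of_card_eq_finrank' hcard).ge
  simpa only [OrthonormalBasis.coe_mk] using
    (OrthonormalBasis.mk hv hsp).sum_inner_mul_inner x y

theorem IsONFrame.orthonormal {x y z : EuclideanSpace ℝ (Fin 3)} (h : IsONFrame x y z) :
    Orthonormal ℝ ![x, y, z] := by
  obtain ⟨hx, hy, hz, hxy, hxz, hyz⟩ := h
  simp [orthonormal_vecCons_iff, Fin.forall_fin_succ, hx, hy, hz, hxy, hxz, hyz]

theorem IsONFrame.inner_mul_inner_add {x y z : EuclideanSpace ℝ (Fin 3)} (h : IsONFrame x y z)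
    (v w : EuclideanSpace ℝ (Fin 3)) :
    ⟪v, x⟫ * ⟪w, x⟫ + ⟪v, y⟫ * ⟪w, y⟫ + ⟪v, z⟫ * ⟪w, z⟫ = ⟪v, w⟫ := by
  simpa only [Fin.sum_univ_three, Matrix.cons_val_zero, Matrix.cons_val_one, Matrix.cons_val_two,
    Matrix.head_cons, Matrix.tail_cons, real_inner_comm w x, real_inner_comm w y,
    real_inner_comm w z] using
    h.orthonormal.sum_inner_mul_inner_of_card_eq_finrank (by simp) v w

theorem IsONFrame.inner_sq_add {x y z : EuclideanSpace ℝ (Fin 3)} (h : IsONFrame x y z)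
    (v : EuclideanSpace ℝ (Fin 3)) :
    ⟪v, x⟫ ^ 2 + ⟪v, y⟫ ^ 2 + ⟪v, z⟫ ^ 2 = ‖v‖ ^ 2 := by
  simpa only [← sq, real_inner_self_eq_norm_sq] using h.inner_mul_inner_add v v

theorem frame_form_eq (c a₁ a₂ a₃ a₄ p q r p' q' r' σ : ℝ) (hσ : σ ^ 2 = 1)
    (hrow : c ^ 2 + a₁ ^ 2 + a₃ ^ 2 = 1) (hcol : c ^ 2 + a₂ ^ 2 + a₄ ^ 2 = 1)
    (hu : p ^ 2 + q ^ 2 + r ^ 2 = 1)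
    (hp : p' * c + q' * a₁ + r' * a₃ = p) (hp' : p * c + q * a₂ + r * a₄ = p') :
    a₁ * ((1 / 2) * a₁ + σ * p' * q') + a₂ * ((1 / 2) * a₂ + σ * p * q) +
      a₃ * ((1 / 2) * a₃ + σ * p' * r') + a₄ * ((1 / 2) * a₄ + σ * p * r) =
      (a₂ * r - a₄ * q) ^ 2 + (1 - σ * c) * (p + σ * p') ^ 2 := by
  linear_combination (1/2) * hrow + (1/2 - q*q - r*r) * hcol + (σ*p') * hp +
      (σ*p + p' - c*p + a₂*q + a₄*r) * hp' - (1 - c*c) * hu +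
      (2*c*p*p' - (1 - σ*c)*p'*p') * hσ

theorem frame_form_nonneg (c a₁ a₂ a₃ a₄ p q r p' q' r' σ : ℝ) (hσ : σ ^ 2 = 1)
    (hrow : c ^ 2 + a₁ ^ 2 + a₃ ^ 2 = 1) (hcol : c ^ 2 + a₂ ^ 2 + a₄ ^ 2 = 1)
    (hu : p ^ 2 + q ^ 2 + r ^ 2 = 1)
    (hp : p' * c + q' * a₁ + r' * a₃ = p) (hp' : p * c + q * a₂ + r * a₄ = p') :
    0 ≤ a₁ * ((1 / 2) * a₁ + σ * p' * q') + a₂ * ((1 / 2) * a₂ + σ * p * q) +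
      a₃ * ((1 / 2) * a₃ + σ * p' * r') + a₄ * ((1 / 2) * a₄ + σ * p * r) := by
  have hσc : σ * c ≤ 1 := by
    have hsq : (σ * c) ^ 2 ≤ 1 := by
      rw [mul_pow, hσ, one_mul]
      linarith [sq_nonneg a₁, sq_nonneg a₃]
    exact (abs_le.1 (sq_le_one_iff_abs_le_one _ |>.1 hsq)).2
  rw [frame_form_eq c a₁ a₂ a₃ a₄ p q r p' q' r' σ hσ hrow hcol hu hp hp']
  have : 0 ≤ 1 - σ * c := by linarith
  positivity

theorem stmt7 (x₁ y₁ z₁ x₂ y₂ z₂ u : EuclideanSpace ℝ (Fin 3))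
    (h1 : IsONFrame x₁ y₁ z₁) (h2 : IsONFrame x₂ y₂ z₂) (hu : ‖u‖ = 1)
    (σ : ℝ) (hσ : σ = -1 ∨ σ = 1) :
    ⟪x₁, y₂⟫ * ((1 / 2) * ⟪x₁, y₂⟫ + σ * ⟪u, x₂⟫ * ⟪u, y₂⟫) +
    ⟪x₂, y₁⟫ * ((1 / 2) * ⟪x₂, y₁⟫ + σ * ⟪u, x₁⟫ * ⟪u, y₁⟫) +
    ⟪x₁, z₂⟫ * ((1 / 2) * ⟪x₁, z₂⟫ + σ * ⟪u, x₂⟫ * ⟪u, z₂⟫) +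
    ⟪x₂, z₁⟫ * ((1 / 2) * ⟪x₂, z₁⟫ + σ * ⟪u, x₁⟫ * ⟪u, z₁⟫) ≥ 0 := by
  have hσ2 : σ ^ 2 = 1 := by rcases hσ with rfl | rfl <;> norm_num
  have hrow := h2.inner_sq_add x₁
  have hcol := h1.inner_sq_add x₂
  have hu₁ := h1.inner_sq_add u
  have hp := h2.inner_mul_inner_add u x₁
  have hp' := h1.inner_mul_inner_add u x₂
  rw [h1.1, one_pow] at hrow
  rw [h2.1, one_pow, real_inner_comm x₁ x₂] at hcol
  rw [hu, one_pow] at hu₁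
  rw [real_inner_comm x₁ x₂] at hp'
  exact frame_form_nonneg _ _ _ _ _ _ _ _ _ _ _ _ hσ2 hrow hcol hu₁ hp hp'
end

section
/- Let x₁, x₂, u ∈ ℝ³ be unit vectors. Then 1 − x₂·x₁ + 2 (u·x₂)(u·x₁) ≥ 0. -/
open RealInnerProductSpace

theorem stmt9 (x₁ x₂ u : EuclideanSpace ℝ (Fin 3))
    (hx₁ : ‖x₁‖ = 1) (hx₂ : ‖x₂‖ = 1) (hu : ‖u‖ = 1) :
    1 - ⟪x₂, x₁⟫ + 2 * ⟪u, x₂⟫ * ⟪u, x₁⟫ ≥ 0 := by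
  set a := ⟪u, x₁⟫ with ha
  set b := ⟪u, x₂⟫ with hb
  set v₁ : EuclideanSpace ℝ (Fin 3) := x₁ - a • u with hv₁
  set v₂ : EuclideanSpace ℝ (Fin 3) := x₂ - b • u with hv₂
  have huu : ⟪u, u⟫ = 1 := by
    rw [real_inner_self_eq_norm_sq, hu]; norm_num
  have hx₁x₁ : ⟪x₁, x₁⟫ = 1 := by
    rw [real_inner_self_eq_norm_sq, hx₁]; norm_num
  have hx₂x₂ : ⟪x₂, x₂⟫ = 1 := by
    rw [real_inner_self_eq_norm_sq, hx₂]; norm_num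
  have hinner : ⟪v₂, v₁⟫ = ⟪x₂, x₁⟫ - a * b := by
    simp only [hv₁, hv₂, inner_sub_left, inner_sub_right, real_inner_smul_left,
      real_inner_smul_right, huu]
    rw [← ha, real_inner_comm u x₂, ← hb]; ring
  have hn₁ : ‖v₁‖ ^ 2 = 1 - a ^ 2 := by
    rw [← real_inner_self_eq_norm_sq, hv₁]
    simp only [inner_sub_left, inner_sub_right, real_inner_smul_left,
      real_inner_smul_right, huu, hx₁x₁]
    rw [real_inner_comm u x₁, ← ha]; ring
  have hn₂ : ‖v₂‖ ^ 2 = 1 - b ^ 2 := by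
    rw [← real_inner_self_eq_norm_sq, hv₂]
    simp only [inner_sub_left, inner_sub_right, real_inner_smul_left,
      real_inner_smul_right, huu, hx₂x₂]
    rw [real_inner_comm u x₂, ← hb]; ring
  have hcs : ⟪v₂, v₁⟫ ≤ ‖v₂‖ * ‖v₁‖ := real_inner_le_norm v₂ v₁
  have hnn : 0 ≤ ‖v₂‖ * ‖v₁‖ := mul_nonneg (norm_nonneg _) (norm_nonneg _)
  have key : ⟪x₂, x₁⟫ - a * b ≤ 1 + a * b := by
    rw [← hinner]
    nlinarith [sq_nonneg (a + b), sq_nonneg (‖v₂‖ * ‖v₁‖), hn₁, hn₂, hcs, hnn,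
      sq_nonneg (‖v₂‖ * ‖v₁‖ - (1 + a * b))]
  nlinarith [key]
end

section
/- Fix σ ∈ {−1,+1}, a function f : (0,∞) → ℝ, and constants η, μ > 0. Let r₁, r₂, x₁, y₁, z₁, x₂, y₂, z₂ : [0,∞) → ℝ³ be a differentiable solution of the two-vehicle system ṙ_j = x_j, ẋ_j = y_j u_j + z_j v_j, ẏ_j = −x_j u_j, ż_j = −x_j v_j (j = 1,2), with (x_j, y_j, z_j) orthonormal frames, where (writing r = r₂ − r₁, w = r/|r|) u₁ = σ η (w·x₁)(w·y₁) + μ (x₂·y₁) + f(|r|)(w·y₁) and v₁ = σ η (w·x₁)(w·z₁) + μ (x₂·z₁) + f(|r|)(w·z₁). Suppose at time t₀ that r(t₀) ≠ 0 and x₂(t₀) = x₁(t₀). Then the derivative of t ↦ r(t)·x₁(t) at t₀ equals |r| [ 1 − (w·x₁)² ] [ σ η (w·x₁) + f(|r|) ], evaluated at t₀. -/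
/-!
When x₂ = x₁ the relative velocity ṙ = x₂ - x₁ vanishes, so only ⟪r, ẋ₁⟫ contributes; the
alignment term μ⟪x₂, ·⟫ of the control drops out by orthogonality, leaving
ẋ₁ = (σηa + f)(⟪w, y₁⟫y₁ + ⟪w, z₁⟫z₁) with a = ⟪w, x₁⟫. Pairing with r = |r| w and using
Parseval's identity in the frame, ⟪w, y₁⟫² + ⟪w, z₁⟫² = 1 - a².
-/

open RealInnerProductSpace

namespace IsONFrame

variable {x y z : EuclideanSpace ℝ (Fin 3)}

theorem orthonormal_s15 (h : IsONFrame x y z) : Orthonormal ℝ ![x, y, z] := by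
  obtain ⟨hx, hy, hz, hxy, hxz, hyz⟩ := h
  refine ⟨fun i => ?_, fun i j hij => ?_⟩
  · fin_cases i <;> simpa
  · fin_cases i <;> fin_cases j <;> simp_all [real_inner_comm]

theorem inner_sq_add_inner_sq_add_inner_sq (h : IsONFrame x y z) (w : EuclideanSpace ℝ (Fin 3)) :
    ⟪w, x⟫ ^ 2 + ⟪w, y⟫ ^ 2 + ⟪w, z⟫ ^ 2 = ‖w‖ ^ 2 := by
  let b := (basisOfOrthonormalOfCardEqFinrank h.orthonormal_s15 (by simp)).toOrthonormalBasis
    (by simpa using h.orthonormal_s15)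
  have hb : ⇑b = ![x, y, z] := by simp [b]
  simpa [hb, Fin.sum_univ_three] using b.sum_sq_inner_left w

theorem inner_sq_add_inner_sq_of_norm_eq_one (h : IsONFrame x y z)
    {w : EuclideanSpace ℝ (Fin 3)} (hw : ‖w‖ = 1) :
    ⟪w, y⟫ ^ 2 + ⟪w, z⟫ ^ 2 = 1 - ⟪w, x⟫ ^ 2 := by
  linear_combination h.inner_sq_add_inner_sq_add_inner_sq w + congrArg (· ^ 2) hw

end IsONFrame

theorem stmt15_general (σ : ℝ)
    (f : ℝ → ℝ) (η μ : ℝ)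
    (r₁ r₂ x₁ y₁ z₁ x₂ : ℝ → EuclideanSpace ℝ (Fin 3))
    (u₁ v₁ : ℝ → ℝ)
    (frame1 : ∀ t ≥ (0 : ℝ), IsONFrame (x₁ t) (y₁ t) (z₁ t))
    (hr₁ : ∀ t ≥ (0 : ℝ), HasDerivAt r₁ (x₁ t) t)
    (hr₂ : ∀ t ≥ (0 : ℝ), HasDerivAt r₂ (x₂ t) t)
    (hx₁ : ∀ t ≥ (0 : ℝ), HasDerivAt x₁ (u₁ t • y₁ t + v₁ t • z₁ t) t)
    (hu₁ : ∀ t ≥ (0 : ℝ),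
      u₁ t = σ * η * ⟪‖r₂ t - r₁ t‖⁻¹ • (r₂ t - r₁ t), x₁ t⟫ *
               ⟪‖r₂ t - r₁ t‖⁻¹ • (r₂ t - r₁ t), y₁ t⟫ +
             μ * ⟪x₂ t, y₁ t⟫ +
             f ‖r₂ t - r₁ t‖ * ⟪‖r₂ t - r₁ t‖⁻¹ • (r₂ t - r₁ t), y₁ t⟫)
    (hv₁ : ∀ t ≥ (0 : ℝ),
      v₁ t = σ * η * ⟪‖r₂ t - r₁ t‖⁻¹ • (r₂ t - r₁ t), x₁ t⟫ *
               ⟪‖r₂ t - r₁ t‖⁻¹ • (r₂ t - r₁ t), z₁ t⟫ +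
             μ * ⟪x₂ t, z₁ t⟫ +
             f ‖r₂ t - r₁ t‖ * ⟪‖r₂ t - r₁ t‖⁻¹ • (r₂ t - r₁ t), z₁ t⟫)
    (t₀ : ℝ) (ht₀ : t₀ ≥ 0)
    (hrt₀ : r₂ t₀ - r₁ t₀ ≠ 0) (hxt₀ : x₂ t₀ = x₁ t₀) :
    HasDerivAt (fun t => ⟪r₂ t - r₁ t, x₁ t⟫)
      (‖r₂ t₀ - r₁ t₀‖ *
        (1 - ⟪‖r₂ t₀ - r₁ t₀‖⁻¹ • (r₂ t₀ - r₁ t₀), x₁ t₀⟫ ^ 2) *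
        (σ * η * ⟪‖r₂ t₀ - r₁ t₀‖⁻¹ • (r₂ t₀ - r₁ t₀), x₁ t₀⟫ + f ‖r₂ t₀ - r₁ t₀‖))
      t₀ := by
  obtain ⟨-, -, -, hxy, hxz, -⟩ := frame1 t₀ ht₀
  set r := r₂ t₀ - r₁ t₀
  set w := ‖r‖⁻¹ • r
  set c := σ * η * ⟪w, x₁ t₀⟫ + f ‖r‖
  have hu : u₁ t₀ = c * ⟪w, y₁ t₀⟫ := by rw [hu₁ t₀ ht₀, hxt₀, hxy]; ring
  have hv : v₁ t₀ = c * ⟪w, z₁ t₀⟫ := by rw [hv₁ t₀ ht₀, hxt₀, hxz]; ring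
  have hrw : ∀ v, ⟪r, v⟫ = ‖r‖ * ⟪w, v⟫ := fun v => by
    rw [real_inner_smul_left, ← mul_assoc, mul_inv_cancel₀ (norm_ne_zero_iff.2 hrt₀), one_mul]
  have hparseval := (frame1 t₀ ht₀).inner_sq_add_inner_sq_of_norm_eq_one (w := w)
    (by simp [w, norm_smul, hrt₀])
  refine (((hr₂ t₀ ht₀).sub (hr₁ t₀ ht₀)).inner ℝ (hx₁ t₀ ht₀)).congr_deriv ?_
  rw [Pi.sub_apply, hxt₀, sub_self, inner_zero_left, add_zero, inner_add_right,
    real_inner_smul_right, real_inner_smul_right, hrw, hrw, hu, hv]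
  linear_combination ‖r‖ * c * hparseval

theorem stmt15 (σ : ℝ) (hσ : σ = -1 ∨ σ = 1)
    (f : ℝ → ℝ) (η μ : ℝ) (hη : 0 < η) (hμ : 0 < μ)
    (r₁ r₂ x₁ y₁ z₁ x₂ y₂ z₂ : ℝ → EuclideanSpace ℝ (Fin 3))
    (u₁ v₁ u₂ v₂ : ℝ → ℝ)
    (frame1 : ∀ t ≥ (0 : ℝ), IsONFrame (x₁ t) (y₁ t) (z₁ t))
    (frame2 : ∀ t ≥ (0 : ℝ), IsONFrame (x₂ t) (y₂ t) (z₂ t))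
    (hr₁ : ∀ t ≥ (0 : ℝ), HasDerivAt r₁ (x₁ t) t)
    (hr₂ : ∀ t ≥ (0 : ℝ), HasDerivAt r₂ (x₂ t) t)
    (hx₁ : ∀ t ≥ (0 : ℝ), HasDerivAt x₁ (u₁ t • y₁ t + v₁ t • z₁ t) t)
    (hy₁ : ∀ t ≥ (0 : ℝ), HasDerivAt y₁ (-u₁ t • x₁ t) t)
    (hz₁ : ∀ t ≥ (0 : ℝ), HasDerivAt z₁ (-v₁ t • x₁ t) t)
    (hx₂ : ∀ t ≥ (0 : ℝ), HasDerivAt x₂ (u₂ t • y₂ t + v₂ t • z₂ t) t)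
    (hy₂ : ∀ t ≥ (0 : ℝ), HasDerivAt y₂ (-u₂ t • x₂ t) t)
    (hz₂ : ∀ t ≥ (0 : ℝ), HasDerivAt z₂ (-v₂ t • x₂ t) t)
    (hu₁ : ∀ t ≥ (0 : ℝ),
      u₁ t = σ * η * ⟪‖r₂ t - r₁ t‖⁻¹ • (r₂ t - r₁ t), x₁ t⟫ *
               ⟪‖r₂ t - r₁ t‖⁻¹ • (r₂ t - r₁ t), y₁ t⟫ +
             μ * ⟪x₂ t, y₁ t⟫ +
             f ‖r₂ t - r₁ t‖ * ⟪‖r₂ t - r₁ t‖⁻¹ • (r₂ t - r₁ t), y₁ t⟫)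
    (hv₁ : ∀ t ≥ (0 : ℝ),
      v₁ t = σ * η * ⟪‖r₂ t - r₁ t‖⁻¹ • (r₂ t - r₁ t), x₁ t⟫ *
               ⟪‖r₂ t - r₁ t‖⁻¹ • (r₂ t - r₁ t), z₁ t⟫ +
             μ * ⟪x₂ t, z₁ t⟫ +
             f ‖r₂ t - r₁ t‖ * ⟪‖r₂ t - r₁ t‖⁻¹ • (r₂ t - r₁ t), z₁ t⟫)
    (t₀ : ℝ) (ht₀ : t₀ ≥ 0)
    (hrt₀ : r₂ t₀ - r₁ t₀ ≠ 0) (hxt₀ : x₂ t₀ = x₁ t₀) :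
    HasDerivAt (fun t => ⟪r₂ t - r₁ t, x₁ t⟫)
      (‖r₂ t₀ - r₁ t₀‖ *
        (1 - ⟪‖r₂ t₀ - r₁ t₀‖⁻¹ • (r₂ t₀ - r₁ t₀), x₁ t₀⟫ ^ 2) *
        (σ * η * ⟪‖r₂ t₀ - r₁ t₀‖⁻¹ • (r₂ t₀ - r₁ t₀), x₁ t₀⟫ + f ‖r₂ t₀ - r₁ t₀‖))
      t₀ :=
  stmt15_general σ f η μ r₁ r₂ x₁ y₁ z₁ x₂ u₁ v₁ frame1 hr₁ hr₂ hx₁ hu₁ hv₁ t₀ ht₀ hrt₀ hxt₀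
end

section
/- Let k₁, k₂ ∈ ℝ be constants with a = √(k₁² + k₂²) ≠ 0, and let γ, T, M₁, M₂ : ℝ → ℝ³ be differentiable functions satisfying the natural Frenet equations γ' = T, T' = k₁ M₁ + k₂ M₂, M₁' = −k₁ T, M₂' = −k₂ T, with (T(s), M₁(s), M₂(s)) an orthonormal frame for every s. Then γ traces a circle of radius 1/a: there exist a point c ∈ ℝ³ and a unit vector n ∈ ℝ³ such that |γ(s) − c| = 1/a and (γ(s) − c)·n = 0 for all s. -/
/-!
Differentiating the natural Frenet equations shows that the center of curvature
`γ + a⁻² (k₁ M₁ + k₂ M₂)`, `a = √(k₁² + k₂²)`, and the binormal direction `k₂ M₁ - k₁ M₂`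
are constant. Since `M₁, M₂` stay orthonormal, `γ` keeps distance
`a⁻² · |k₁ M₁ + k₂ M₂| = 1/a` from that center, and `γ - c` stays orthogonal to the binormal.
-/

open RealInnerProductSpace

section OrthonormalPair

variable {E : Type*} [NormedAddCommGroup E] [InnerProductSpace ℝ E] {u v : E}

lemma inner_smul_add_smul_of_orthonormal (hu : ‖u‖ = 1) (hv : ‖v‖ = 1) (huv : ⟪u, v⟫ = 0)
    (α β α' β' : ℝ) : ⟪α • u + β • v, α' • u + β' • v⟫ = α * α' + β * β' := by
  have hvu : ⟪v, u⟫ = 0 := by rw [real_inner_comm, huv]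
  simp only [inner_add_left, inner_add_right, real_inner_smul_left, real_inner_smul_right,
    real_inner_self_eq_norm_sq, hu, hv, huv, hvu]
  ring

lemma norm_smul_add_smul_of_orthonormal (hu : ‖u‖ = 1) (hv : ‖v‖ = 1) (huv : ⟪u, v⟫ = 0)
    (α β : ℝ) : ‖α • u + β • v‖ = √(α ^ 2 + β ^ 2) := by
  rw [norm_eq_sqrt_real_inner, inner_smul_add_smul_of_orthonormal hu hv huv]
  ring_nf

end OrthonormalPair

lemma eq_of_forall_hasDerivAt_zero {E : Type*} [NormedAddCommGroup E] [NormedSpace ℝ E]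
    {f : ℝ → E} (hf : ∀ s, HasDerivAt f 0 s) (s t : ℝ) : f s = f t :=
  is_const_of_deriv_eq_zero (fun x ↦ (hf x).differentiableAt) (fun x ↦ (hf x).deriv) s t

namespace NaturalFrenet

variable {E : Type*} [NormedAddCommGroup E] [InnerProductSpace ℝ E]

noncomputable def curvatureCenter (k₁ k₂ : ℝ) (γ M₁ M₂ : ℝ → E) (s : ℝ) : E :=
  γ s + (k₁ ^ 2 + k₂ ^ 2)⁻¹ • (k₁ • M₁ s + k₂ • M₂ s)

def binormal (k₁ k₂ : ℝ) (M₁ M₂ : ℝ → E) (s : ℝ) : E :=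
  k₂ • M₁ s - k₁ • M₂ s

variable {k₁ k₂ : ℝ} {γ T M₁ M₂ : ℝ → E}

lemma hasDerivAt_curvatureCenter (hk : k₁ ^ 2 + k₂ ^ 2 ≠ 0)
    (hγ : ∀ s, HasDerivAt γ (T s) s) (hM₁ : ∀ s, HasDerivAt M₁ (-k₁ • T s) s)
    (hM₂ : ∀ s, HasDerivAt M₂ (-k₂ • T s) s) (s : ℝ) :
    HasDerivAt (curvatureCenter k₁ k₂ γ M₁ M₂) 0 s := by
  refine ((hγ s).add ((((hM₁ s).const_smul k₁).add
    ((hM₂ s).const_smul k₂)).const_smul (k₁ ^ 2 + k₂ ^ 2)⁻¹)).congr_deriv ?_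
  rw [smul_smul, smul_smul, ← add_smul, smul_smul,
    show k₁ * -k₁ + k₂ * -k₂ = -(k₁ ^ 2 + k₂ ^ 2) by ring, mul_neg, inv_mul_cancel₀ hk,
    neg_smul, one_smul, add_neg_cancel]

lemma hasDerivAt_binormal (hM₁ : ∀ s, HasDerivAt M₁ (-k₁ • T s) s)
    (hM₂ : ∀ s, HasDerivAt M₂ (-k₂ • T s) s) (s : ℝ) :
    HasDerivAt (binormal k₁ k₂ M₁ M₂) 0 s :=
  (((hM₁ s).const_smul k₂).sub ((hM₂ s).const_smul k₁)).congr_deriv (by module)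

lemma sub_curvatureCenter (s : ℝ) :
    γ s - curvatureCenter k₁ k₂ γ M₁ M₂ s = (-(k₁ ^ 2 + k₂ ^ 2)⁻¹) • (k₁ • M₁ s + k₂ • M₂ s) := by
  rw [curvatureCenter, neg_smul, sub_add_cancel_left]

lemma norm_sub_curvatureCenter {s : ℝ} (hM₁ : ‖M₁ s‖ = 1) (hM₂ : ‖M₂ s‖ = 1)
    (hM₁₂ : ⟪M₁ s, M₂ s⟫ = 0) :
    ‖γ s - curvatureCenter k₁ k₂ γ M₁ M₂ s‖ = 1 / √(k₁ ^ 2 + k₂ ^ 2) := by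
  have hK : k₁ ^ 2 + k₂ ^ 2 = √(k₁ ^ 2 + k₂ ^ 2) ^ 2 := (Real.sq_sqrt (by positivity)).symm
  rw [sub_curvatureCenter, norm_smul, norm_smul_add_smul_of_orthonormal hM₁ hM₂ hM₁₂, norm_neg,
    norm_inv, Real.norm_of_nonneg (by positivity), hK, Real.sqrt_sq (Real.sqrt_nonneg _)]
  -- for `a = 0` both sides vanish, as `0⁻¹ = 0`
  rcases eq_or_ne √(k₁ ^ 2 + k₂ ^ 2) 0 with h | h
  · simp [h]
  · field_simp

lemma norm_binormal {s : ℝ} (hM₁ : ‖M₁ s‖ = 1) (hM₂ : ‖M₂ s‖ = 1) (hM₁₂ : ⟪M₁ s, M₂ s⟫ = 0) :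
    ‖binormal k₁ k₂ M₁ M₂ s‖ = √(k₁ ^ 2 + k₂ ^ 2) := by
  rw [binormal, sub_eq_add_neg, ← neg_smul, norm_smul_add_smul_of_orthonormal hM₁ hM₂ hM₁₂,
    neg_sq, add_comm]

lemma inner_sub_curvatureCenter_binormal {s : ℝ} (hM₁ : ‖M₁ s‖ = 1) (hM₂ : ‖M₂ s‖ = 1)
    (hM₁₂ : ⟪M₁ s, M₂ s⟫ = 0) :
    ⟪γ s - curvatureCenter k₁ k₂ γ M₁ M₂ s, binormal k₁ k₂ M₁ M₂ s⟫ = 0 := by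
  rw [sub_curvatureCenter, binormal, sub_eq_add_neg, ← neg_smul, real_inner_smul_left,
    inner_smul_add_smul_of_orthonormal hM₁ hM₂ hM₁₂]
  ring

end NaturalFrenet

open NaturalFrenet in
theorem stmt17_general (k₁ k₂ : ℝ) (ha : Real.sqrt (k₁ ^ 2 + k₂ ^ 2) ≠ 0)
    (γ T M₁ M₂ : ℝ → EuclideanSpace ℝ (Fin 3))
    (hframe : ∀ s, IsONFrame (T s) (M₁ s) (M₂ s))
    (hγ : ∀ s, HasDerivAt γ (T s) s)
    (hM₁ : ∀ s, HasDerivAt M₁ (-k₁ • T s) s)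
    (hM₂ : ∀ s, HasDerivAt M₂ (-k₂ • T s) s) :
    ∃ c n : EuclideanSpace ℝ (Fin 3), ‖n‖ = 1 ∧
      ∀ s, ‖γ s - c‖ = 1 / Real.sqrt (k₁ ^ 2 + k₂ ^ 2) ∧ ⟪γ s - c, n⟫ = 0 := by
  have hK : k₁ ^ 2 + k₂ ^ 2 ≠ 0 := fun h ↦ ha (by rw [h, Real.sqrt_zero])
  have hc := eq_of_forall_hasDerivAt_zero (hasDerivAt_curvatureCenter hK hγ hM₁ hM₂)
  have hn := eq_of_forall_hasDerivAt_zero (hasDerivAt_binormal hM₁ hM₂)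
  refine ⟨curvatureCenter k₁ k₂ γ M₁ M₂ 0, (√(k₁ ^ 2 + k₂ ^ 2))⁻¹ • binormal k₁ k₂ M₁ M₂ 0,
    ?_, fun s ↦ ?_⟩
  · obtain ⟨-, h₁, h₂, -, -, h₁₂⟩ := hframe 0
    rw [norm_smul, norm_binormal h₁ h₂ h₁₂, norm_inv, Real.norm_of_nonneg (Real.sqrt_nonneg _),
      inv_mul_cancel₀ ha]
  · obtain ⟨-, h₁, h₂, -, -, h₁₂⟩ := hframe s
    rw [← hc s, ← hn s, real_inner_smul_right, inner_sub_curvatureCenter_binormal h₁ h₂ h₁₂,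
      mul_zero]
    exact ⟨norm_sub_curvatureCenter h₁ h₂ h₁₂, rfl⟩

theorem stmt17 (k₁ k₂ : ℝ) (ha : Real.sqrt (k₁ ^ 2 + k₂ ^ 2) ≠ 0)
    (γ T M₁ M₂ : ℝ → EuclideanSpace ℝ (Fin 3))
    (hframe : ∀ s, IsONFrame (T s) (M₁ s) (M₂ s))
    (hγ : ∀ s, HasDerivAt γ (T s) s)
    (hT : ∀ s, HasDerivAt T (k₁ • M₁ s + k₂ • M₂ s) s)
    (hM₁ : ∀ s, HasDerivAt M₁ (-k₁ • T s) s)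
    (hM₂ : ∀ s, HasDerivAt M₂ (-k₂ • T s) s) :
    ∃ c n : EuclideanSpace ℝ (Fin 3), ‖n‖ = 1 ∧
      ∀ s, ‖γ s - c‖ = 1 / Real.sqrt (k₁ ^ 2 + k₂ ^ 2) ∧ ⟪γ s - c, n⟫ = 0 :=
  stmt17_general k₁ k₂ ha γ T M₁ M₂ hframe hγ hM₁ hM₂
end

section
/- Let x₁, x₂ ∈ ℝ³ be unit vectors with x₁ ≠ x₂ and x₁ ≠ −x₂, let σ ∈ {−1,+1}, and define E(u) = [1 − (x₁·x₂)²] + σ·( (x₁·x₂)[ (u·x₁)² + (u·x₂)² ] − 2 (u·x₁)(u·x₂) ) for unit vectors u ∈ ℝ³. Then for every unit vector u there exists a unit vector v in the plane spanned by x₁ and x₂ such that E(v) ≤ E(u). -/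
open RealInnerProductSpace

set_option maxHeartbeats 1000000 in
theorem stmt18 (x₁ x₂ : EuclideanSpace ℝ (Fin 3))
    (hx₁ : ‖x₁‖ = 1) (hx₂ : ‖x₂‖ = 1)
    (hne : x₁ ≠ x₂) (hne' : x₁ ≠ -x₂)
    (σ : ℝ) (hσ : σ = -1 ∨ σ = 1)
    (E : EuclideanSpace ℝ (Fin 3) → ℝ)
    (hE : ∀ u, E u = (1 - ⟪x₁, x₂⟫ ^ 2) +
      σ * (⟪x₁, x₂⟫ * (⟪u, x₁⟫ ^ 2 + ⟪u, x₂⟫ ^ 2) - 2 * ⟪u, x₁⟫ * ⟪u, x₂⟫)) :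
    ∀ u : EuclideanSpace ℝ (Fin 3), ‖u‖ = 1 →
      ∃ v ∈ Submodule.span ℝ ({x₁, x₂} : Set (EuclideanSpace ℝ (Fin 3))),
        ‖v‖ = 1 ∧ E v ≤ E u := by
  intro u hu
  set c : ℝ := ⟪x₁, x₂⟫ with hc
  have hc21 : ⟪x₂, x₁⟫ = c := by rw [hc, real_inner_comm]
  have hx11 : ⟪x₁, x₁⟫ = 1 := by
    rw [real_inner_self_eq_norm_mul_norm, hx₁]; ring
  have hx22 : ⟪x₂, x₂⟫ = 1 := by
    rw [real_inner_self_eq_norm_mul_norm, hx₂]; ring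
  have huu : ⟪u, u⟫ = 1 := by
    rw [real_inner_self_eq_norm_mul_norm, hu]; ring
  have hcne1 : c ≠ 1 := fun h => hne ((inner_eq_one_iff_of_norm_eq_one hx₁ hx₂).mp h)
  have hcnem1 : c ≠ -1 := by
    intro h
    apply hne'
    have hnx₂ : ‖-x₂‖ = 1 := by rwa [norm_neg]
    exact (inner_eq_one_iff_of_norm_eq_one (𝕜 := ℝ) hx₁ hnx₂).mp (by
      rw [inner_neg_right, ← hc, h]; norm_num)
  have habs : |c| ≤ 1 := by
    have := abs_real_inner_le_norm x₁ x₂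
    simpa [hx₁, hx₂] using this
  have hclt : c < 1 := lt_of_le_of_ne (abs_le.mp habs).2 hcne1
  have hcgt : -1 < c := lt_of_le_of_ne (abs_le.mp habs).1 (fun h => hcnem1 h.symm)
  have hcs : c ^ 2 < 1 := by nlinarith
  -- key inequality
  set s : ℝ := ⟪u, x₁⟫ with hs
  set t : ℝ := ⟪u, x₂⟫ with ht
  have hs1 : ⟪x₁, u⟫ = s := by rw [hs, real_inner_comm]
  have ht1 : ⟪x₂, u⟫ = t := by rw [ht, real_inner_comm]
  have hkey : s ^ 2 + t ^ 2 - 2 * c * s * t ≤ 1 - c ^ 2 := by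
    set w : EuclideanSpace ℝ (Fin 3) :=
      (1 - c ^ 2) • u - (s - c * t) • x₁ - (t - c * s) • x₂ with hw
    have h0 : (0 : ℝ) ≤ ⟪w, w⟫ := real_inner_self_nonneg
    have hexp : ⟪w, w⟫ = (1 - c ^ 2) * ((1 - c ^ 2) - (s ^ 2 + t ^ 2 - 2 * c * s * t)) := by
      rw [hw]
      simp only [inner_sub_left, inner_sub_right, real_inner_smul_left,
        real_inner_smul_right, huu, hx11, hx22, hc21, hs1, ht1, ← hc, ← hs, ← ht]
      ring
    nlinarith [h0, hexp, hcs]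
  -- E u ≥ 0
  have hEu : 0 ≤ E u := by
    rw [hE, ← hs, ← ht]
    rcases hσ with h | h <;> subst h
    · nlinarith [sq_nonneg (s + t), hkey, hcgt, hclt]
    · nlinarith [sq_nonneg (s - t), hkey, hcgt, hclt]
  rcases hσ with h | h <;> subst h
  · -- σ = -1 : use normalized x₁ - x₂
    have hne0 : x₁ - x₂ ≠ 0 := sub_ne_zero.mpr hne
    refine ⟨‖x₁ - x₂‖⁻¹ • (x₁ - x₂), ?_, norm_smul_inv_norm hne0, ?_⟩
    · exact Submodule.smul_mem _ _ (Submodule.sub_mem _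
        (Submodule.subset_span (Set.mem_insert _ _))
        (Submodule.subset_span (Set.mem_insert_of_mem _ rfl)))
    · have hN : ‖x₁ - x₂‖ ^ 2 = 2 - 2 * c := by
        rw [norm_sub_sq_real, hx₁, hx₂, ← hc]; ring
      have hNpos : (0 : ℝ) < ‖x₁ - x₂‖ := norm_pos_iff.mpr hne0
      have hi1 : ⟪‖x₁ - x₂‖⁻¹ • (x₁ - x₂), x₁⟫ = ‖x₁ - x₂‖⁻¹ * (1 - c) := by
        rw [real_inner_smul_left, inner_sub_left, hx11, hc21]
      have hi2 : ⟪‖x₁ - x₂‖⁻¹ • (x₁ - x₂), x₂⟫ = ‖x₁ - x₂‖⁻¹ * (c - 1) := by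
        rw [real_inner_smul_left, inner_sub_left, hx22, ← hc]
      have hEv : E (‖x₁ - x₂‖⁻¹ • (x₁ - x₂)) = 0 := by
        have hd : (2 : ℝ) - 2 * c ≠ 0 := by nlinarith
        have hk : (‖x₁ - x₂‖⁻¹ * (1 - c)) ^ 2 = (1 - c) / 2 := by
          rw [mul_pow, inv_pow, hN]
          field_simp
        rw [hE, hi1, hi2]
        linear_combination (-(2 * (c + 1))) * hk
      linarith [hEu, hEv.le]
  · -- σ = 1 : use normalized x₁ + x₂
    have hne0 : x₁ + x₂ ≠ 0 := by
      intro h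
      exact hne' (by rwa [add_eq_zero_iff_eq_neg] at h)
    refine ⟨‖x₁ + x₂‖⁻¹ • (x₁ + x₂), ?_, norm_smul_inv_norm hne0, ?_⟩
    · exact Submodule.smul_mem _ _ (Submodule.add_mem _
        (Submodule.subset_span (Set.mem_insert _ _))
        (Submodule.subset_span (Set.mem_insert_of_mem _ rfl)))
    · have hN : ‖x₁ + x₂‖ ^ 2 = 2 + 2 * c := by
        rw [norm_add_sq_real, hx₁, hx₂, ← hc]; ring
      have hNpos : (0 : ℝ) < ‖x₁ + x₂‖ := norm_pos_iff.mpr hne0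
      have hi1 : ⟪‖x₁ + x₂‖⁻¹ • (x₁ + x₂), x₁⟫ = ‖x₁ + x₂‖⁻¹ * (1 + c) := by
        rw [real_inner_smul_left, inner_add_left, hx11, hc21]
      have hi2 : ⟪‖x₁ + x₂‖⁻¹ • (x₁ + x₂), x₂⟫ = ‖x₁ + x₂‖⁻¹ * (1 + c) := by
        rw [real_inner_smul_left, inner_add_left, hx22, ← hc]; ring
      have hEv : E (‖x₁ + x₂‖⁻¹ • (x₁ + x₂)) = 0 := by
        have hd : (2 : ℝ) + 2 * c ≠ 0 := by nlinarith
        have hk : (‖x₁ + x₂‖⁻¹ * (1 + c)) ^ 2 = (1 + c) / 2 := by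
          rw [mul_pow, inv_pow, hN]
          field_simp
        rw [hE, hi1, hi2]
        linear_combination (-(2 * (1 - c))) * hk
      linarith [hEu, hEv.le]
end
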